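/- Correctness of the selection-sort planning program: the program that repeatedly (outer loop over i from 0 to n−1) sets min := i, scans j from i+1 to n−1 updating min whenever v(j) < v(min), then swaps v(i) and v(min), terminates with the vector sorted in non-decreasing order. -/

import Mathlib

/-- Swap the entries at positions `i` and `j` of a vector. -/
def swapAt (v : ℕ → ℕ) (i j : ℕ) : ℕ → ℕ :=
  fun t => if t = i then v j else if t = j then v i else v t

/-- Scan over the index list, updating the current minimum index `m` whenever a
strictly smaller value is found. -/
def scanMin (v : ℕ → ℕ) : ℕ → List ℕ → ℕ
  | m, [] => m
  | m, j :: js => scanMin v (if v j < v m then j else m) js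

/-- Index of the minimum value found scanning `j` from `i+1` to `n-1`, starting
with `min := i`. -/
def selectMin (v : ℕ → ℕ) (i n : ℕ) : ℕ :=
  scanMin v i ((List.range n).drop (i + 1))

/-- Selection sort: `selSort v n k` is the vector after `k` outer-loop iterations;
iteration `i` sets `min := selectMin · i n` and swaps positions `i` and `min`. -/
def selSort (v : ℕ → ℕ) (n : ℕ) : ℕ → (ℕ → ℕ)
  | 0 => v
  | i + 1 => swapAt (selSort v n i) i (selectMin (selSort v n i) i n)

theorem mem_drop_range {j k n : ℕ} : j ∈ (List.range n).drop k ↔ k ≤ j ∧ j < n := by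
  rw [List.range_eq_range', List.drop_range']
  simp only [List.mem_range'_1]
  omega

theorem scanMin_mem (v : ℕ → ℕ) (m : ℕ) (js : List ℕ) : scanMin v m js ∈ m :: js := by
  induction js generalizing m with
  | nil => exact List.mem_singleton_self m
  | cons j js ih =>
    rcases List.mem_cons.mp (ih (if v j < v m then j else m)) with h | h
    · rw [scanMin, h]
      split_ifs <;> simp
    · exact List.mem_cons_of_mem _ (List.mem_cons_of_mem _ h)

theorem scanMin_le (v : ℕ → ℕ) {m j : ℕ} {js : List ℕ} (hj : j ∈ m :: js) :
    v (scanMin v m js) ≤ v j := by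
  induction js generalizing m j with
  | nil => simp_all [scanMin]
  | cons k js ih =>
    have hstep : v (if v k < v m then k else m) ≤ min (v k) (v m) := by split_ifs <;> omega
    rw [scanMin]
    rcases List.mem_cons.mp hj with rfl | hj
    · exact (ih List.mem_cons_self).trans (hstep.trans (min_le_right _ _))
    rcases List.mem_cons.mp hj with rfl | hj
    · exact (ih List.mem_cons_self).trans (hstep.trans (min_le_left _ _))
    · exact ih (List.mem_cons_of_mem _ hj)

theorem map_range_perm_range {f : ℕ → ℕ} {n : ℕ} (hf : f.Injective)
    (hlt : ∀ t < n, f t < n) : ((List.range n).map f).Perm (List.range n) := by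
  have hsub : (List.range n).map f ⊆ List.range n := by
    intro x hx
    obtain ⟨t, ht, rfl⟩ := List.mem_map.mp hx
    exact List.mem_range.mpr (hlt t (List.mem_range.mp ht))
  exact ((List.nodup_range.map hf).subperm hsub).perm_of_length_le (by simp)

theorem le_selectMin (v : ℕ → ℕ) (i n : ℕ) : i ≤ selectMin v i n := by
  rcases List.mem_cons.mp (scanMin_mem v i ((List.range n).drop (i + 1))) with h | h
  · exact h.ge
  · exact (mem_drop_range.mp h).1.trans' (Nat.le_succ i)

theorem selectMin_lt (v : ℕ → ℕ) {i n : ℕ} (hi : i < n) : selectMin v i n < n := by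
  unfold selectMin
  rcases List.mem_cons.mp (scanMin_mem v i ((List.range n).drop (i + 1))) with h | h
  · rwa [h]
  · exact (mem_drop_range.mp h).2

theorem selectMin_le (v : ℕ → ℕ) {i n j : ℕ} (hij : i ≤ j) (hjn : j < n) :
    v (selectMin v i n) ≤ v j := by
  refine scanMin_le v (List.mem_cons.mpr ?_)
  rcases hij.eq_or_lt with rfl | hij
  · exact .inl rfl
  · exact .inr (mem_drop_range.mpr ⟨hij, hjn⟩)

theorem swapAt_eq_comp_swap (v : ℕ → ℕ) (i j : ℕ) :
    swapAt v i j = v ∘ Equiv.swap i j := by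
  funext t
  simp only [swapAt, Function.comp_apply, Equiv.swap_apply_def]
  split_ifs <;> rfl

theorem map_range_swapAt_perm (v : ℕ → ℕ) {i j n : ℕ} (hi : i < n) (hj : j < n) :
    ((List.range n).map (swapAt v i j)).Perm ((List.range n).map v) := by
  rw [swapAt_eq_comp_swap, ← List.map_map]
  refine (map_range_perm_range (Equiv.swap i j).injective fun t ht => ?_).map v
  rw [Equiv.swap_apply_def]
  split_ifs <;> assumption

/-- The loop invariant: positions `0, …, i - 1` hold the `i` smallest of the first `n` entries,
in order. -/
def SortedUpTo (w : ℕ → ℕ) (i n : ℕ) : Prop :=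
  ∀ a b, a < i → a ≤ b → b < n → w a ≤ w b

theorem SortedUpTo.swapAt_selectMin {w : ℕ → ℕ} {i n : ℕ} (hw : SortedUpTo w i n)
    (hi : i < n) : SortedUpTo (swapAt w i (selectMin w i n)) (i + 1) n := by
  set m := selectMin w i n
  have him : i ≤ m := le_selectMin w i n
  have hmn : m < n := selectMin_lt w hi
  intro a b ha hab hb
  have hswap_b : a ≤ Equiv.swap i m b ∧ Equiv.swap i m b < n := by
    rw [Equiv.swap_apply_def]; split_ifs <;> omega
  rw [swapAt_eq_comp_swap, Function.comp_apply, Function.comp_apply]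
  rcases (Nat.lt_succ_iff.mp ha).lt_or_eq with ha | rfl
  · rw [Equiv.swap_apply_of_ne_of_ne ha.ne (by omega)]
    exact hw a _ ha hswap_b.1 hswap_b.2
  · rw [Equiv.swap_apply_left]
    exact selectMin_le w hswap_b.1 hswap_b.2

theorem selSort_sortedUpTo (v : ℕ → ℕ) {n i : ℕ} (hin : i ≤ n) :
    SortedUpTo (selSort v n i) i n := by
  induction i with
  | zero => intro a _ ha; omega
  | succ i ih => exact (ih (Nat.le_of_succ_le hin)).swapAt_selectMin hin

theorem selSort_perm (v : ℕ → ℕ) {n i : ℕ} (hin : i ≤ n) :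
    ((List.range n).map (selSort v n i)).Perm ((List.range n).map v) := by
  induction i with
  | zero => rfl
  | succ i ih =>
    exact (map_range_swapAt_perm _ hin (selectMin_lt _ hin)).trans (ih (Nat.le_of_succ_le hin))

/-- Correctness of the selection-sort planning program: after the `n`
outer iterations the vector restricted to positions `0..n-1` is a permutation of the
input and is sorted in non-decreasing order. -/
theorem selection_sort_correct (v : ℕ → ℕ) (n : ℕ) :
    (∀ a b, a ≤ b → b < n → selSort v n n a ≤ selSort v n n b) ∧
    ((List.range n).map (selSort v n n)).Perm ((List.range n).map v) := by
  refine ⟨fun a b hab hbn => ?_, selSort_perm v le_rfl⟩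
  exact selSort_sortedUpTo v le_rfl a b (hab.trans_lt hbn) hab hbn
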